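/- Let f(x,v) = Σ_{n=0}^{N_L−1} C_n(x)·φ_n(v) with φ_n the rescaled Legendre basis on [v_a, v_b], and let (BC)_n(x) = Σ_{i=0}^{n−1} σ_{n,i}·C_i(x) with σ_{n,i} the derivative coefficients, so that dφ_n/dv = Σ_{i<n} σ_{n,i} φ_i. Then for every x, Σ_{n=0}^{N_L−1} C_n(x)·(BC)_n(x) = (1/(2(v_b−v_a)))·( f(x,v_b)² − f(x,v_a)² ). -/

import Mathlib

open MeasureTheory Finset

noncomputable def Leg : ℕ → ℝ → ℝ
  | 0 => fun _ => 1
  | 1 => fun x => x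
  | n + 2 => fun x =>
      ((2 * (n : ℝ) + 3) * x * Leg (n + 1) x - ((n : ℝ) + 1) * Leg n x) / ((n : ℝ) + 2)

/-- Rescaled Legendre basis on `[va, vb]`. -/
noncomputable def phi (va vb : ℝ) (n : ℕ) (v : ℝ) : ℝ :=
  Real.sqrt (2 * n + 1) * Leg n ((2 * v - (va + vb)) / (vb - va))

/-- The recursion coefficients `σ_n`. -/
noncomputable def sigma (va vb : ℝ) (n : ℕ) : ℝ :=
  if n = 0 then 0
  else (vb - va) / 2 * n / Real.sqrt ((2 * (n : ℝ) + 1) * (2 * (n : ℝ) - 1))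

/-- The coefficient `σ̄ = (va+vb)/2`. -/
noncomputable def sigmaBar (va vb : ℝ) : ℝ := (va + vb) / 2

/-- The derivative coefficients `σ_{n,i}`. -/
noncomputable def sigma' (va vb : ℝ) (n i : ℕ) : ℝ :=
  (if (n - i) % 2 = 1 then 1 else 0) * 2 *
    Real.sqrt ((2 * (n : ℝ) + 1) * (2 * (i : ℝ) + 1)) / (vb - va)

/-- Fourier basis `ψ_k(x) = exp(2πikx/L)` on `[0, L]`. -/
noncomputable def psi (L : ℝ) (k : ℤ) (x : ℝ) : ℂ :=
  Complex.exp (2 * (Real.pi : ℂ) * Complex.I * (k : ℂ) * (x : ℂ) / (L : ℂ))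

/-
At the endpoints the Legendre polynomials take the values `L_n(1) = 1` and `L_n(-1) = (-1)^n`, so with
`a_n = C_n √(2n+1)` the two boundary values of `f` are `Σ a_n` and `Σ (-1)^n a_n`. The parity switch in
`σ_{n,i}` equals `(1 - (-1)^(n+i)) / 2`, which turns the left-hand side into
`(Σ_{i<n} a_n a_i - Σ_{i<n} (-1)^n a_n (-1)^i a_i) / (v_b - v_a)`; each double sum over `i < n` is half
of a square minus its diagonal, and the two diagonals agree.
-/

theorem Leg_one (n : ℕ) : Leg n 1 = 1 := by
  induction n using Nat.twoStepInduction with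
  | zero => rfl
  | one => rfl
  | more n ih₀ ih₁ =>
    simp only [Leg, ih₀, ih₁]
    field_simp
    ring

theorem Leg_neg_one (n : ℕ) : Leg n (-1) = (-1) ^ n := by
  induction n using Nat.twoStepInduction with
  | zero => rfl
  | one => simp [Leg]
  | more n ih₀ ih₁ =>
    simp only [Leg, ih₀, ih₁]
    field_simp
    ring

theorem phi_right_endpoint {va vb : ℝ} (h : va ≠ vb) (n : ℕ) : phi va vb n vb = √(2 * n + 1) := by
  have hone : (2 * vb - (va + vb)) / (vb - va) = 1 := by
    rw [div_eq_one_iff_eq (sub_ne_zero.2 h.symm)]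
    ring
  rw [phi, hone, Leg_one, mul_one]

theorem phi_left_endpoint {va vb : ℝ} (h : va ≠ vb) (n : ℕ) :
    phi va vb n va = (-1) ^ n * √(2 * n + 1) := by
  have hneg : (2 * va - (va + vb)) / (vb - va) = -1 := by
    rw [div_eq_iff (sub_ne_zero.2 h.symm)]
    ring
  rw [phi, hneg, Leg_neg_one, mul_comm]

theorem parity_switch_eq {n i : ℕ} (hin : i ≤ n) :
    (if (n - i) % 2 = 1 then (1 : ℝ) else 0) = (1 - (-1) ^ n * (-1) ^ i) / 2 := by
  obtain ⟨k, rfl⟩ := Nat.exists_eq_add_of_le hin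
  have hsq : ((-1 : ℝ) ^ i) * (-1) ^ i = 1 := by rw [← mul_pow]; simp
  have hpow : ((-1 : ℝ) ^ (i + k) * (-1) ^ i) = (-1) ^ k := by
    rw [pow_add]
    linear_combination (-1 : ℝ) ^ k * hsq
  rw [hpow, Nat.add_sub_cancel_left]
  rcases Nat.mod_two_eq_zero_or_one k with h0 | h1
  · simp [h0, Nat.even_iff.2 h0]
  · simp [h1, Nat.odd_iff.2 h1]

theorem sigma'_eq {va vb : ℝ} {n i : ℕ} (hin : i ≤ n) :
    sigma' va vb n i = (1 - (-1) ^ n * (-1) ^ i) * (√(2 * n + 1) * √(2 * i + 1)) / (vb - va) := by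
  rw [sigma', parity_switch_eq hin, Real.sqrt_mul (by positivity)]
  ring

theorem two_mul_sum_range_mul_sum_range {R : Type*} [CommRing R] (b : ℕ → R) (N : ℕ) :
    2 * ∑ n ∈ range N, b n * ∑ i ∈ range n, b i = (∑ n ∈ range N, b n) ^ 2 - ∑ n ∈ range N, b n ^ 2 := by
  induction N with
  | zero => simp
  | succ N ih =>
    rw [sum_range_succ, mul_add, ih, sum_range_succ, sum_range_succ]
    ring

theorem C_dot_BC_eq_boundary (va vb : ℝ) (h : va < vb) (NL : ℕ)
    (C : ℕ → ℝ → ℝ) (x : ℝ) :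
    ∑ n ∈ Finset.range NL, C n x * (∑ i ∈ Finset.range n, sigma' va vb n i * C i x) =
      1 / (2 * (vb - va)) *
        ((∑ n ∈ Finset.range NL, C n x * phi va vb n vb) ^ 2
          - (∑ n ∈ Finset.range NL, C n x * phi va vb n va) ^ 2) := by
  set a : ℕ → ℝ := fun n ↦ C n x * √(2 * n + 1)
  set b : ℕ → ℝ := fun n ↦ (-1) ^ n * a n
  have hsq : ∀ n, b n ^ 2 = a n ^ 2 := fun n ↦ by simp [b, mul_pow, ← pow_mul, pow_mul']
  have hlhs : ∀ n ∈ range NL, C n x * ∑ i ∈ range n, sigma' va vb n i * C i x =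
      (a n * ∑ i ∈ range n, a i - b n * ∑ i ∈ range n, b i) / (vb - va) := by
    intro n _
    rw [mul_sum, mul_sum, mul_sum, ← sum_sub_distrib, sum_div]
    refine sum_congr rfl fun i hi ↦ ?_
    rw [sigma'_eq (mem_range.1 hi).le]
    ring
  have hvb : ∑ n ∈ range NL, C n x * phi va vb n vb = ∑ n ∈ range NL, a n :=
    sum_congr rfl fun n _ ↦ by rw [phi_right_endpoint h.ne]
  have hva : ∑ n ∈ range NL, C n x * phi va vb n va = ∑ n ∈ range NL, b n :=
    sum_congr rfl fun n _ ↦ by rw [phi_left_endpoint h.ne]; ring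
  have ha := two_mul_sum_range_mul_sum_range a NL
  have hb := two_mul_sum_range_mul_sum_range b NL
  simp only [hsq] at hb
  rw [sum_congr rfl hlhs, ← sum_div, sum_sub_distrib, hvb, hva, one_div, mul_inv]
  linear_combination (ha - hb) / 2 / (vb - va)
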